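/- Let k, m, n be positive integers with k < m ≤ n, and let {Ψ_{j1}, …, Ψ_{j(mn)}}, j = 1, …, t, be t mutually unbiased orthonormal bases of the real Hilbert space ℝ^m ⊗ ℝ^n ≅ ℝ^(mn) such that every vector Ψ_{ji} has Schmidt rank at most k. Then t ≤ (k/2)·(m(m+1) − 2)/(m − k). -/

import Mathlib

open Matrix Finset

/-- Schmidt rank of a vector in ℝ^m ⊗ ℝ^n: the rank of the associated m × n matrix. -/
noncomputable def schmidtRank {m n : ℕ} (w : Fin m × Fin n → ℝ) : ℕ :=
  (Matrix.of fun i j => w (i, j) : Matrix (Fin m) (Fin n) ℝ).rank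

/-!
For a unit vector `ψ ∈ ℝ^d`, `d = mn`, let `R_ψ = ψψᵀ - I/d`. For `t` mutually unbiased bases
the Gram matrix of the `td` matrices `R_ψ` (Frobenius inner product) is block diagonal with
blocks `I - 𝟙𝟙ᵀ/d`, hence `≤ I`, so Bessel's inequality `∑_ψ ⟪R_ψ, Z⟫² ≤ ‖Z‖²` holds for every `Z`.
Testing it against `Z = F_ab ⊗ I_n`, where `F_ab` runs over the trace-free symmetrised matrix
units, turns the left side into `∑_ψ (tr ρ_ψ² - 1/m)` with `ρ_ψ` the reduced density matrix, and
the right side into `n (m(m+1)/2 - 1)`. Finally `ρ_ψ` has trace `1` and rank `SR(ψ) ≤ k`, so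
Cauchy–Schwarz on its eigenvalues gives `tr ρ_ψ² ≥ 1/k`.
-/

open scoped Kronecker

theorem Matrix.IsHermitian.trace_sq_le_rank_mul_trace_mul_self {p : Type*} [Fintype p]
    [DecidableEq p] {A : Matrix p p ℝ} (hA : A.IsHermitian) :
    A.trace ^ 2 ≤ A.rank * (A * A).trace := by
  set μ := hA.eigenvalues
  have htr : A.trace = ∑ i, μ i := by simpa using hA.trace_eq_sum_eigenvalues
  have htr_sq : (A * A).trace = ∑ i, μ i ^ 2 := by
    conv_lhs => rw [hA.spectral_theorem, ← map_mul, Unitary.conjStarAlgAut_apply,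
      trace_mul_cycle, Unitary.coe_star_mul_self, one_mul, diagonal_mul_diagonal, trace_diagonal]
    simp [sq, μ]
  classical
  have hrank : A.rank = #{i | μ i ≠ 0} := by
    rw [hA.rank_eq_card_non_zero_eigs, Fintype.card_subtype]
  calc A.trace ^ 2 = (∑ i ∈ {i | μ i ≠ 0}, μ i) ^ 2 := by rw [htr, sum_filter_ne_zero]
    _ ≤ #{i | μ i ≠ 0} * ∑ i ∈ {i | μ i ≠ 0}, μ i ^ 2 := sq_sum_le_card_mul_sum_sq
    _ ≤ A.rank * (A * A).trace := by
      rw [hrank, htr_sq]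
      gcongr
      exact subset_univ _

theorem sum_sq_dotProduct_le_of_gram_le_one {R ι γ : Type*} [CommRing R] [LinearOrder R]
    [IsStrictOrderedRing R] [Fintype ι] [Fintype γ] (v : ι → γ → R)
    (hv : ∀ c : ι → R, ∑ J, ∑ K, c J * c K * (v J ⬝ᵥ v K) ≤ ∑ J, c J ^ 2) (z : γ → R) :
    ∑ J, (v J ⬝ᵥ z) ^ 2 ≤ z ⬝ᵥ z := by
  set c := fun J => v J ⬝ᵥ z
  set u := ∑ J, c J • v J
  have huz : u ⬝ᵥ z = ∑ J, c J ^ 2 := by simp [u, sum_dotProduct, c, sq]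
  have huu : u ⬝ᵥ u = ∑ J, ∑ K, c J * c K * (v J ⬝ᵥ v K) := by
    simp only [u, sum_dotProduct, smul_dotProduct]
    simp [dotProduct_sum, mul_sum, mul_assoc]
  have hpos : 0 ≤ (z - u) ⬝ᵥ (z - u) := sum_nonneg fun g _ => mul_self_nonneg _
  simp only [sub_dotProduct, dotProduct_sub, dotProduct_comm z u] at hpos
  linarith [hv c]

/-- The Gram matrix of the `R_ψ` of mutually unbiased bases has this block form, with `s = 1/d`. -/
theorem sum_mul_mul_blockGram_le {R ι κ : Type*} [CommRing R] [LinearOrder R]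
    [IsStrictOrderedRing R] [Fintype ι] [Fintype κ] [DecidableEq ι] [DecidableEq κ]
    {s : R} (hs : 0 ≤ s) (c : ι × κ → R) :
    ∑ J, ∑ K, c J * c K * (if J.1 = K.1 then (if J.2 = K.2 then 1 else 0) - s else 0)
      ≤ ∑ J, c J ^ 2 := by
  have hblock : ∀ j, 0 ≤ ∑ i, ∑ i', c (j, i) * c (j, i') * s := fun j => by
    have := mul_nonneg (sq_nonneg (∑ i, c (j, i))) hs
    simp_rw [sq, sum_mul_sum, sum_mul] at this
    exact this
  simp [Fintype.sum_prod_type, mul_sub, sum_sub_distrib, ← sq]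
  linarith [sum_nonneg fun j (_ : j ∈ univ) => hblock j]

section TracelessProjector

variable {D : Type*} [Fintype D] [DecidableEq D]

noncomputable def tracelessProjector (ψ : D → ℝ) : Matrix D D ℝ :=
  vecMulVec ψ ψ - (Fintype.card D : ℝ)⁻¹ • 1

theorem tracelessProjector_transpose (ψ : D → ℝ) :
    (tracelessProjector ψ)ᵀ = tracelessProjector ψ := by
  simp [tracelessProjector, transpose_vecMulVec]

theorem trace_tracelessProjector_mul {ψ φ : D → ℝ} (hψ : ψ ⬝ᵥ ψ = 1) (hφ : φ ⬝ᵥ φ = 1) :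
    (tracelessProjector ψ * tracelessProjector φ).trace
      = (ψ ⬝ᵥ φ) ^ 2 - (Fintype.card D : ℝ)⁻¹ := by
  rcases isEmpty_or_nonempty D with _ | _
  · simp [dotProduct] at hψ
  simp [tracelessProjector, sub_mul, mul_sub, vecMulVec_mul_vecMulVec, trace_sub, hψ, hφ, sq]

theorem sum_sq_trace_tracelessProjector_transpose_mul_le {ι κ : Type*} [Fintype ι] [Fintype κ]
    [DecidableEq ι] [DecidableEq κ] (Ψ : ι → κ → D → ℝ)
    (horth : ∀ j i i', Ψ j i ⬝ᵥ Ψ j i' = if i = i' then 1 else 0)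
    (hmub : ∀ j j', j ≠ j' → ∀ i i', (Ψ j i ⬝ᵥ Ψ j' i') ^ 2 = (Fintype.card D : ℝ)⁻¹)
    (Z : Matrix D D ℝ) :
    ∑ J : ι × κ, ((tracelessProjector (Ψ J.1 J.2))ᵀ * Z).trace ^ 2 ≤ (Zᵀ * Z).trace := by
  have hunit : ∀ j i, Ψ j i ⬝ᵥ Ψ j i = 1 := fun j i => (horth j i i).trans (if_pos rfl)
  have hgram : ∀ J K : ι × κ,
      vec (tracelessProjector (Ψ J.1 J.2)) ⬝ᵥ vec (tracelessProjector (Ψ K.1 K.2))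
        = if J.1 = K.1 then (if J.2 = K.2 then 1 else 0) - (Fintype.card D : ℝ)⁻¹ else 0 := by
    rintro ⟨j, i⟩ ⟨j', i'⟩
    rw [vec_dotProduct_vec, tracelessProjector_transpose,
      trace_tracelessProjector_mul (hunit j i) (hunit j' i')]
    by_cases hj : j = j'
    · subst hj
      simp [horth]
    · simp [hj, hmub j j' hj]
  have := sum_sq_dotProduct_le_of_gram_le_one
    (fun J : ι × κ => vec (tracelessProjector (Ψ J.1 J.2)))
    (fun c => by simpa only [hgram] using sum_mul_mul_blockGram_le (by positivity) c) (vec Z)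
  simpa only [vec_dotProduct_vec] using this

end TracelessProjector

section SymmTracelessUnit

variable {α : Type*} [Fintype α] [DecidableEq α]

/-- These `F_ab` form a Parseval frame of the trace-free symmetric matrices, whose dimension
`m(m+1)/2 - 1` is what appears in the bound. -/
noncomputable def symmTracelessUnit (a b : α) : Matrix α α ℝ :=
  (2 : ℝ)⁻¹ • (single a b 1 + single b a 1) - (if a = b then (Fintype.card α : ℝ)⁻¹ else 0) • 1

theorem trace_transpose_mul_symmTracelessUnit (X : Matrix α α ℝ) (a b : α) :
    (Xᵀ * symmTracelessUnit a b).trace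
      = (X a b + X b a) / 2 - if a = b then X.trace / Fintype.card α else 0 := by
  rw [symmTracelessUnit, Matrix.mul_sub, Matrix.mul_smul, Matrix.mul_add, Matrix.mul_smul,
    Matrix.mul_one, trace_sub, trace_smul, trace_add, trace_mul_single, trace_mul_single,
    trace_smul, trace_transpose]
  simp
  split_ifs <;> ring

theorem sum_sq_trace_transpose_mul_symmTracelessUnit {X : Matrix α α ℝ} (hX : Xᵀ = X) :
    ∑ a, ∑ b, (Xᵀ * symmTracelessUnit a b).trace ^ 2
      = (X * X).trace - X.trace ^ 2 / Fintype.card α := by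
  have hsymm : ∀ a b, X b a = X a b := fun a b => congrFun (congrFun hX a) b
  have htrace_sq : (X * X).trace = ∑ a, ∑ b, X a b ^ 2 := by
    simp [trace, mul_apply, hsymm, sq]
  rcases isEmpty_or_nonempty α with _ | _
  · simp
  simp_rw [trace_transpose_mul_symmTracelessUnit, hsymm, add_self_div_two, htrace_sq]
  simp [sub_sq, sum_add_distrib, sum_sub_distrib, ite_pow, mul_ite, ← sum_mul, trace]
  field_simp
  simp only [← mul_sum]
  ring

theorem trace_symmTracelessUnit (a b : α) : (symmTracelessUnit a b).trace = 0 := by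
  have : Nonempty α := ⟨a⟩
  have hα : (Fintype.card α : ℝ) ≠ 0 := by simp [Fintype.card_ne_zero (α := α)]
  simpa [one_apply, hα, eq_comm] using trace_transpose_mul_symmTracelessUnit 1 a b

theorem sum_trace_transpose_symmTracelessUnit_mul_self [Nonempty α] :
    ∑ a : α, ∑ b, ((symmTracelessUnit a b)ᵀ * symmTracelessUnit a b).trace
      = Fintype.card α * (Fintype.card α + 1) / 2 - 1 := by
  have hentry : ∀ a b : α, ((symmTracelessUnit a b)ᵀ * symmTracelessUnit a b).trace
      = 2⁻¹ + if a = b then 2⁻¹ - (Fintype.card α : ℝ)⁻¹ else 0 := fun a b => by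
    rw [trace_transpose_mul_symmTracelessUnit, trace_symmTracelessUnit]
    by_cases h : a = b
    · simp [h, symmTracelessUnit]
      ring
    · simp [h, Ne.symm h, symmTracelessUnit, -ite_smul]
  simp [hentry, sum_add_distrib]
  field_simp
  ring

end SymmTracelessUnit

section ReducedDensity

variable {α β : Type*} [Fintype β]

/-- `Tr_B |ψ⟩⟨ψ| = M Mᵀ`, with `M` the Schmidt matrix of `ψ`. -/
noncomputable def reducedDensity (ψ : α × β → ℝ) : Matrix α α ℝ :=
  of (fun a x => ψ (a, x)) * (of fun a x => ψ (a, x))ᵀ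

theorem reducedDensity_apply (ψ : α × β → ℝ) (a b : α) :
    reducedDensity ψ a b = ∑ x, ψ (a, x) * ψ (b, x) := by
  simp [reducedDensity, mul_apply]

theorem trace_reducedDensity [Fintype α] (ψ : α × β → ℝ) :
    (reducedDensity ψ).trace = ψ ⬝ᵥ ψ := by
  simp [trace, reducedDensity_apply, dotProduct, Fintype.sum_prod_type]

theorem reducedDensity_transpose (ψ : α × β → ℝ) : (reducedDensity ψ)ᵀ = reducedDensity ψ := by
  simp [reducedDensity]

/-- The partial trace is adjoint to `F ↦ F ⊗ I`. -/
theorem trace_vecMulVec_transpose_mul_kronecker_one [Fintype α] [DecidableEq β] (ψ : α × β → ℝ)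
    (F : Matrix α α ℝ) :
    ((vecMulVec ψ ψ)ᵀ * (F ⊗ₖ (1 : Matrix β β ℝ))).trace = ((reducedDensity ψ)ᵀ * F).trace := by
  simp [trace, mul_apply, reducedDensity_apply, vecMulVec_apply, kroneckerMap_apply, one_apply,
    Fintype.sum_prod_type, sum_mul]
  exact sum_congr rfl fun _ _ => sum_comm.trans
    (sum_congr rfl fun _ _ => sum_congr rfl fun _ _ => by ring)

theorem trace_tracelessProjector_transpose_mul_kronecker_one [Fintype α] [DecidableEq α]
    [DecidableEq β] [Nonempty β] (ψ : α × β → ℝ) (F : Matrix α α ℝ) :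
    ((tracelessProjector ψ)ᵀ * (F ⊗ₖ (1 : Matrix β β ℝ))).trace
      = ((reducedDensity ψ)ᵀ * F).trace - F.trace / Fintype.card α := by
  simp only [tracelessProjector, transpose_sub, Matrix.sub_mul, trace_sub,
    trace_vecMulVec_transpose_mul_kronecker_one]
  simp [trace_kronecker]
  field_simp

theorem trace_kronecker_one_transpose_mul_self [Fintype α] [DecidableEq β] (F : Matrix α α ℝ) :
    ((F ⊗ₖ (1 : Matrix β β ℝ))ᵀ * (F ⊗ₖ 1)).trace = Fintype.card β * (Fᵀ * F).trace := by
  rw [← kroneckerMap_transpose, transpose_one, ← mul_kronecker_mul, trace_kronecker]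
  simp [mul_comm]

theorem sum_sq_trace_tracelessProjector_transpose_mul_symmTracelessUnit_kronecker_one [Fintype α]
    [DecidableEq α] [DecidableEq β] [Nonempty β] {ψ : α × β → ℝ} (hψ : ψ ⬝ᵥ ψ = 1) :
    ∑ a, ∑ b, ((tracelessProjector ψ)ᵀ * (symmTracelessUnit a b ⊗ₖ (1 : Matrix β β ℝ))).trace ^ 2
      = (reducedDensity ψ * reducedDensity ψ).trace - (Fintype.card α : ℝ)⁻¹ := by
  simp_rw [trace_tracelessProjector_transpose_mul_kronecker_one, trace_symmTracelessUnit,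
    zero_div, sub_zero, sum_sq_trace_transpose_mul_symmTracelessUnit (reducedDensity_transpose ψ),
    trace_reducedDensity, hψ]
  simp

end ReducedDensity

theorem inv_le_trace_reducedDensity_mul_self {k m n : ℕ} {ψ : Fin m × Fin n → ℝ}
    (hψ : ψ ⬝ᵥ ψ = 1) (hSR : schmidtRank ψ ≤ k) :
    (k : ℝ)⁻¹ ≤ (reducedDensity ψ * reducedDensity ψ).trace := by
  have hherm : (reducedDensity ψ).IsHermitian := by
    simpa [reducedDensity] using isHermitian_mul_conjTranspose_self (of fun a x => ψ (a, x))
  have hrank : (reducedDensity ψ).rank = schmidtRank ψ := rank_self_mul_transpose _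
  have hCS : 1 ≤ schmidtRank ψ * (reducedDensity ψ * reducedDensity ψ).trace := by
    simpa [trace_reducedDensity, hψ, hrank] using hherm.trace_sq_le_rank_mul_trace_mul_self
  rcases Nat.eq_zero_or_pos k with rfl | hk
  · norm_num [Nat.le_zero.1 hSR] at hCS
  have hT : 0 < (reducedDensity ψ * reducedDensity ψ).trace :=
    pos_of_mul_pos_right (by linarith) (Nat.cast_nonneg _)
  rw [inv_le_iff_one_le_mul₀' (by exact_mod_cast hk)]
  exact hCS.trans (mul_le_mul_of_nonneg_right (by exact_mod_cast hSR) hT.le)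

theorem card_mul_card_mul_inv_sub_inv_le_of_mub {ι κ : Type*} [Fintype ι] [Fintype κ]
    [DecidableEq ι] [DecidableEq κ] {k m n : ℕ} (hm : 0 < m) (hn : 0 < n)
    (Ψ : ι → κ → Fin m × Fin n → ℝ)
    (horth : ∀ j i i', Ψ j i ⬝ᵥ Ψ j i' = if i = i' then 1 else 0)
    (hmub : ∀ j j', j ≠ j' → ∀ i i', (Ψ j i ⬝ᵥ Ψ j' i') ^ 2 = ((m : ℝ) * n)⁻¹)
    (hSR : ∀ j i, schmidtRank (Ψ j i) ≤ k) :
    Fintype.card ι * Fintype.card κ * ((k : ℝ)⁻¹ - (m : ℝ)⁻¹) ≤ n * (m * (m + 1) / 2 - 1) := by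
  have : Nonempty (Fin m) := ⟨⟨0, hm⟩⟩
  have : Nonempty (Fin n) := ⟨⟨0, hn⟩⟩
  have hunit : ∀ j i, Ψ j i ⬝ᵥ Ψ j i = 1 := fun j i => (horth j i i).trans (if_pos rfl)
  set Z := fun a b : Fin m => symmTracelessUnit a b ⊗ₖ (1 : Matrix (Fin n) (Fin n) ℝ)
  set S := fun (J : ι × κ) (a b : Fin m) => ((tracelessProjector (Ψ J.1 J.2))ᵀ * Z a b).trace ^ 2
  calc _ = ∑ _J : ι × κ, ((k : ℝ)⁻¹ - (m : ℝ)⁻¹) := by simp [mul_assoc, mul_sub]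
    _ ≤ ∑ J, ∑ a, ∑ b, S J a b := sum_le_sum fun J _ => by
      simp only [S, Z, sum_sq_trace_tracelessProjector_transpose_mul_symmTracelessUnit_kronecker_one
        (hunit J.1 J.2), Fintype.card_fin]
      linarith [inv_le_trace_reducedDensity_mul_self (hunit J.1 J.2) (hSR J.1 J.2)]
    _ = ∑ a, ∑ b, ∑ J, S J a b := sum_comm.trans (sum_congr rfl fun _ _ => sum_comm)
    _ ≤ ∑ a, ∑ b, ((Z a b)ᵀ * Z a b).trace := sum_le_sum fun a _ => sum_le_sum fun b _ =>
        sum_sq_trace_tracelessProjector_transpose_mul_le Ψ horth (by simpa using hmub) (Z a b)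
    _ = n * (m * (m + 1) / 2 - 1) := by
      simp only [Z, trace_kronecker_one_transpose_mul_self, ← mul_sum,
        sum_trace_transpose_symmTracelessUnit_mul_self, Fintype.card_fin]

theorem mub_low_schmidt_rank_bound_real (k m n t : ℕ) (hk : 0 < k) (hkm : k < m)
    (hmn : m ≤ n)
    (Ψ : Fin t → Fin (m * n) → (Fin m × Fin n) → ℝ)
    (horth : ∀ j, ∀ i i' : Fin (m * n),
      (∑ a, Ψ j i a * Ψ j i' a) = if i = i' then 1 else 0)
    (hmub : ∀ j j', j ≠ j' → ∀ i i' : Fin (m * n),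
      |∑ a, Ψ j i a * Ψ j' i' a| = 1 / Real.sqrt (m * n))
    (hSR : ∀ j i, schmidtRank (Ψ j i) ≤ k) :
    (t : ℝ) ≤ (k : ℝ) / 2 * ((m : ℝ) * (m + 1) - 2) / ((m : ℝ) - (k : ℝ)) := by
  have hm : 0 < m := hk.trans hkm
  have hn : 0 < n := hm.trans_le hmn
  have hmub_sq : ∀ j j', j ≠ j' → ∀ i i', (Ψ j i ⬝ᵥ Ψ j' i') ^ 2 = ((m : ℝ) * n)⁻¹ :=
    fun j j' hj i i' => by
      rw [← sq_abs, dotProduct, hmub j j' hj i i', div_pow, Real.sq_sqrt (by positivity), one_pow,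
        one_div]
  have key := card_mul_card_mul_inv_sub_inv_le_of_mub hm hn Ψ horth hmub_sq hSR
  simp only [Fintype.card_fin, Nat.cast_mul] at key
  have hk' : (k : ℝ) ≠ 0 := Nat.cast_ne_zero.2 hk.ne'
  have hm' : (m : ℝ) ≠ 0 := Nat.cast_ne_zero.2 hm.ne'
  have hn' : (n : ℝ) ≠ 0 := Nat.cast_ne_zero.2 hn.ne'
  rw [le_div_iff₀ (sub_pos.2 (by exact_mod_cast hkm))]
  calc (t : ℝ) * (m - k) = k / n * (t * (m * n) * ((k : ℝ)⁻¹ - (m : ℝ)⁻¹)) := by field_simp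
    _ ≤ k / n * (n * (m * (m + 1) / 2 - 1)) := by gcongr
    _ = k / 2 * (m * (m + 1) - 2) := by field_simp
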